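/- For each r ≥ 0, the B^r seminorm on Dirac k-chains in ℝⁿ is a norm: if A is a nonzero Dirac k-chain then ‖A‖_{B^r} > 0. -/

import Mathlib

noncomputable section

open Finsupp

variable {n : ℕ} {V : Type*} [NormedAddCommGroup V] [NormedSpace ℝ V]

/-- A Dirac `k`-chain in `ℝⁿ` is a finitely supported function from points of `ℝⁿ` to
`k`-vectors (modelled by a normed space `V`); the `k`-element `(p;α)` is `Finsupp.single p α`. -/
abbrev DiracChain (n : ℕ) (V : Type*) [NormedAddCommGroup V] [NormedSpace ℝ V] :=
  EuclideanSpace ℝ (Fin n) →₀ V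

/-- Translation `T_u` of a Dirac chain through the vector `u`. -/
def translateChain (u : EuclideanSpace ℝ (Fin n)) (A : DiracChain n V) : DiracChain n V :=
  Finsupp.mapDomain (· + u) A

/-- The `j`-difference `k`-chain `Δ_{σ}(p;α)` for `σ = u₁∘⋯∘u_j`: the iterated difference
`(T_{u_1}-Id)⋯(T_{u_j}-Id)(p;α)`, written out as the alternating sum over subsets. -/
def diffChain (p : EuclideanSpace ℝ (Fin n)) (α : V) {j : ℕ}
    (u : Fin j → EuclideanSpace ℝ (Fin n)) : DiracChain n V :=
  ∑ S : Finset (Fin j), ((-1 : ℝ) ^ (j - S.card)) •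
    Finsupp.single (p + ∑ i ∈ S, u i) α

/-- The set of costs `Σᵢ ‖σᵢ‖‖αᵢ‖` of decompositions of `A` into difference chains of order
at most `r`. -/
def BnormSet (r : ℕ) (A : DiracChain n V) : Set ℝ :=
  {c | ∃ (m : ℕ) (j : Fin m → ℕ) (p : Fin m → EuclideanSpace ℝ (Fin n)) (α : Fin m → V)
      (u : ∀ i : Fin m, Fin (j i) → EuclideanSpace ℝ (Fin n)),
    (∀ i, j i ≤ r) ∧ (A = ∑ i, diffChain (p i) (α i) (u i)) ∧
    c = ∑ i, (∏ l, ‖u i l‖) * ‖α i‖}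

/-- The `B^r` seminorm of a Dirac chain: the infimum over all decompositions into difference
chains of order at most `r` of the total cost. -/
def Bnorm (r : ℕ) (A : DiracChain n V) : ℝ :=
  sInf (BnormSet r A)

/-- Evaluation of an exterior form `ω` (a function assigning to each point a linear functional
on `k`-vectors) on a Dirac chain. -/
def formEval (ω : EuclideanSpace ℝ (Fin n) → V →ₗ[ℝ] ℝ) (A : DiracChain n V) : ℝ :=
  A.sum fun p α => ω p α

/-!
Pick `p` with `A p ≠ 0` and pair `A` with the form `ω x = f x • ℓ`, where `ℓ` norms `A p` and
`f` is a bump function equal to `1` at `p` and vanishing on the rest of the support of `A`, so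
that `ω(A) = ‖A p‖`. On a difference chain `Δ_σ(q;α)` of order `j ≤ r` the form evaluates to
the `j`-fold forward difference of `ω` at `q` in the directions of `σ`, applied to `α`; by the
mean value theorem this is at most `sup ‖Dʲω‖ · ‖σ‖ · ‖α‖`. Summing over any decomposition gives
`‖A p‖ ≤ M · ‖A‖_{B^r}` with `M` bounding the first `r` derivatives of `ω`.
-/

section MultiFwdDiff

variable {ι E F : Type*} [AddCommMonoid E] [AddCommGroup F] [Module ℝ F]

def multiFwdDiff (s : Finset ι) (u : ι → E) (f : E → F) (p : E) : F :=
  ∑ S ∈ s.powerset, (-1 : ℝ) ^ (s.card - S.card) • f (p + ∑ i ∈ S, u i)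

@[simp]
theorem multiFwdDiff_empty (u : ι → E) (f : E → F) : multiFwdDiff ∅ u f = f := by
  funext p
  simp [multiFwdDiff]

theorem multiFwdDiff_insert [DecidableEq ι] {s : Finset ι} {a : ι} (ha : a ∉ s)
    (u : ι → E) (f : E → F) :
    multiFwdDiff (insert a s) u f = multiFwdDiff s u (fwdDiff (u a) f) := by
  funext p
  rw [multiFwdDiff, multiFwdDiff, Finset.sum_powerset_insert ha, Finset.card_insert_of_notMem ha,
    ← Finset.sum_add_distrib]
  refine Finset.sum_congr rfl fun t ht => ?_
  have hat : a ∉ t := fun h => ha (Finset.mem_powerset.1 ht h)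
  have hcard : s.card + 1 - t.card = s.card - t.card + 1 := by
    have := Finset.card_le_card (Finset.mem_powerset.1 ht)
    omega
  rw [Finset.sum_insert hat, Finset.card_insert_of_notMem hat, hcard, Nat.add_sub_add_right,
    pow_succ, mul_neg_one, neg_smul, fwdDiff, smul_sub, add_left_comm p (u a), add_comm (u a)]
  abel

end MultiFwdDiff

section Smooth

variable {ι E F : Type*} [NormedAddCommGroup E] [NormedSpace ℝ E]
  [NormedAddCommGroup F] [NormedSpace ℝ F]

theorem ContDiff.fwdDiff {k : WithTop ℕ∞} {f : E → F} (hf : ContDiff ℝ k f) (h : E) :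
    ContDiff ℝ k (fwdDiff h f) :=
  (hf.comp (contDiff_id.add contDiff_const)).sub hf

theorem norm_iteratedFDeriv_fwdDiff_le {k : ℕ} {f : E → F} {M : ℝ} (hf : ContDiff ℝ (k + 1) f)
    (hM : ∀ x, ‖iteratedFDeriv ℝ (k + 1) f x‖ ≤ M) (h x : E) :
    ‖iteratedFDeriv ℝ k (fwdDiff h f) x‖ ≤ M * ‖h‖ := by
  have hk : ContDiff ℝ k f := hf.of_le (by exact_mod_cast k.le_succ)
  have hD : Differentiable ℝ (iteratedFDeriv ℝ k f) :=
    hf.differentiable_iteratedFDeriv (by exact_mod_cast k.lt_succ_self)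
  rw [show fwdDiff h f = (fun y => f (y + h)) - f from rfl,
    iteratedFDeriv_sub_apply (f := fun y => f (y + h))
      (hk.comp (contDiff_id.add contDiff_const)).contDiffAt hk.contDiffAt,
    iteratedFDeriv_comp_add_right]
  simpa using Convex.norm_image_sub_le_of_norm_fderiv_le (fun y _ => hD y)
    (fun y _ => (norm_fderiv_iteratedFDeriv).trans_le (hM y)) convex_univ
    (Set.mem_univ x) (Set.mem_univ (x + h))

theorem norm_multiFwdDiff_le (s : Finset ι) (u : ι → E) {f : E → F} {M : ℝ}
    (hf : ContDiff ℝ s.card f) (hM : ∀ x, ‖iteratedFDeriv ℝ s.card f x‖ ≤ M) (p : E) :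
    ‖multiFwdDiff s u f p‖ ≤ M * ∏ i ∈ s, ‖u i‖ := by
  classical
  induction s using Finset.induction_on generalizing f M with
  | empty =>
    have hM₀ := hM p
    rw [Finset.card_empty, norm_iteratedFDeriv_zero] at hM₀
    simpa using hM₀
  | insert a s ha ih =>
    rw [Finset.card_insert_of_notMem ha] at hf hM
    rw [multiFwdDiff_insert ha, Finset.prod_insert ha, ← mul_assoc]
    exact ih (hf.fwdDiff (u a)).of_succ (norm_iteratedFDeriv_fwdDiff_le hf hM (u a))

end Smooth

section CompactSupport

open scoped ContDiff

variable {E F : Type*} [NormedAddCommGroup E] [NormedSpace ℝ E]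
  [NormedAddCommGroup F] [NormedSpace ℝ F]

theorem ContDiff.exists_bound_iteratedFDeriv_of_hasCompactSupport {r : ℕ} {f : E → F}
    (hf : ContDiff ℝ r f) (hc : HasCompactSupport f) :
    ∃ M, ∀ m ≤ r, ∀ x, ‖iteratedFDeriv ℝ m f x‖ ≤ M := by
  have hbound : ∀ m ≤ r, ∃ C, ∀ x, ‖iteratedFDeriv ℝ m f x‖ ≤ C := fun m hm =>
    (hf.continuous_iteratedFDeriv (by exact_mod_cast hm)).bounded_above_of_compact_support
      (hc.iteratedFDeriv m)
  choose! C hC using hbound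
  exact ⟨(Finset.range (r + 1)).sup' Finset.nonempty_range_add_one C, fun m hm x =>
    (hC m hm x).trans (Finset.le_sup' C (Finset.mem_range.2 (Nat.lt_succ_of_le hm)))⟩

theorem exists_contDiff_hasCompactSupport_eq_one_eq_zero [FiniteDimensional ℝ E]
    (s : Finset E) (p : E) :
    ∃ f : E → ℝ, ContDiff ℝ ∞ f ∧ HasCompactSupport f ∧ f p = 1 ∧ ∀ q ∈ s, q ≠ p → f q = 0 := by
  classical
  obtain ⟨ε, hε, hball⟩ := Metric.isOpen_iff.1
    (s.erase p).finite_toSet.isClosed.isOpen_compl p (by simp)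
  let φ : ContDiffBump p := ⟨ε / 2, ε, half_pos hε, half_lt_self hε⟩
  refine ⟨φ, φ.contDiff, φ.hasCompactSupport, φ.one_of_mem_closedBall ?_, fun q hq hqp => ?_⟩
  · simpa using (half_pos hε).le
  · refine Function.notMem_support.1 fun hφq => (Set.mem_compl_iff _ _).1 (hball ?_)
      (Finset.mem_erase.2 ⟨hqp, hq⟩)
    rwa [φ.support_eq] at hφq

end CompactSupport

theorem formEval_eq_lsum (ω : EuclideanSpace ℝ (Fin n) → V →ₗ[ℝ] ℝ) (A : DiracChain n V) :
    formEval ω A = Finsupp.lsum ℝ ω A :=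
  (Finsupp.lsum_apply ℝ ω A).symm

theorem formEval_diffChain (ω : EuclideanSpace ℝ (Fin n) → StrongDual ℝ V)
    (p : EuclideanSpace ℝ (Fin n)) (α : V) {j : ℕ} (u : Fin j → EuclideanSpace ℝ (Fin n)) :
    formEval (fun x => (ω x : V →ₗ[ℝ] ℝ)) (diffChain p α u) = multiFwdDiff Finset.univ u ω p α := by
  simp [formEval_eq_lsum, diffChain, multiFwdDiff, Finset.powerset_univ]

theorem formEval_smul_eq_apply (ℓ : StrongDual ℝ V) {f : EuclideanSpace ℝ (Fin n) → ℝ}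
    {A : DiracChain n V} {p : EuclideanSpace ℝ (Fin n)} (hfp : f p = 1)
    (hfq : ∀ q ∈ A.support, q ≠ p → f q = 0) :
    formEval (fun x => ((f x • ℓ : StrongDual ℝ V) : V →ₗ[ℝ] ℝ)) A = ℓ (A p) := by
  rw [formEval, Finsupp.sum, Finset.sum_eq_single p]
  · simp [hfp]
  · intro q hq hqp
    simp [hfq q hq hqp]
  · intro hp
    simp [Finsupp.notMem_support_iff.1 hp]

theorem diffChain_fin_zero (p : EuclideanSpace ℝ (Fin n)) (α : V)
    (u : Fin 0 → EuclideanSpace ℝ (Fin n)) : diffChain p α u = Finsupp.single p α := by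
  simp [diffChain, Finset.sum_of_isEmpty]

theorem BnormSet_nonempty (r : ℕ) (A : DiracChain n V) : (BnormSet r A).Nonempty := by
  let e := A.support.equivFin
  refine ⟨_, A.support.card, fun _ => 0, fun i => e.symm i, fun i => A (e.symm i),
    fun _ => Fin.elim0, fun _ => r.zero_le, ?_, rfl⟩
  simp only [diffChain_fin_zero]
  conv_lhs => rw [← Finsupp.sum_single A]
  rw [Finsupp.sum, ← Finset.sum_coe_sort, ← e.symm.sum_comp]

theorem abs_formEval_le_mul_Bnorm {r : ℕ} {ω : EuclideanSpace ℝ (Fin n) → StrongDual ℝ V} {M : ℝ}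
    (hω : ContDiff ℝ r ω) (hM : ∀ m ≤ r, ∀ x, ‖iteratedFDeriv ℝ m ω x‖ ≤ M)
    (A : DiracChain n V) :
    |formEval (fun x => (ω x : V →ₗ[ℝ] ℝ)) A| ≤ M * Bnorm r A := by
  have hM₀ : 0 ≤ M := (norm_nonneg _).trans (hM 0 r.zero_le 0)
  rw [Bnorm, ← smul_eq_mul, ← Real.sInf_smul_of_nonneg hM₀]
  refine le_csInf (BnormSet_nonempty r A).smul_set ?_
  rintro _ ⟨_, ⟨m, j, p, α, u, hj, rfl, rfl⟩, rfl⟩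
  have hterm : ∀ i, |multiFwdDiff Finset.univ (u i) ω (p i) (α i)|
      ≤ M * ((∏ l, ‖u i l‖) * ‖α i‖) := by
    intro i
    have hcard : (Finset.univ : Finset (Fin (j i))).card ≤ r := (Finset.card_fin _).trans_le (hj i)
    rw [← mul_assoc, ← Real.norm_eq_abs]
    exact ((multiFwdDiff Finset.univ (u i) ω (p i)).le_opNorm (α i)).trans
      (mul_le_mul_of_nonneg_right (norm_multiFwdDiff_le _ _ (hω.of_le (by exact_mod_cast hcard))
        (hM _ hcard) _) (norm_nonneg _))
  calc |formEval (fun x => (ω x : V →ₗ[ℝ] ℝ)) (∑ i, diffChain (p i) (α i) (u i))|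
      = |∑ i, multiFwdDiff Finset.univ (u i) ω (p i) (α i)| := by
        simp only [formEval_eq_lsum, map_sum, ← formEval_diffChain]
    _ ≤ ∑ i, |multiFwdDiff Finset.univ (u i) ω (p i) (α i)| := Finset.abs_sum_le_sum_abs _ _
    _ ≤ ∑ i, M * ((∏ l, ‖u i l‖) * ‖α i‖) := Finset.sum_le_sum fun i _ => hterm i
    _ = M • ∑ i, (∏ l, ‖u i l‖) * ‖α i‖ := by rw [smul_eq_mul, Finset.mul_sum]

/-- for each `r ≥ 0` the `B^r` seminorm on Dirac `k`-chains is a norm: if `A` is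
a nonzero Dirac chain, then `‖A‖_{B^r} > 0`. -/
theorem Bnorm_pos_of_ne_zero (n r : ℕ) {V : Type*} [NormedAddCommGroup V] [NormedSpace ℝ V]
    (A : DiracChain n V) (hA : A ≠ 0) :
    0 < Bnorm r A := by
  obtain ⟨p, hp⟩ : ∃ p, A p ≠ 0 := Finsupp.ne_iff.1 hA
  obtain ⟨ℓ, -, hℓ⟩ := exists_dual_vector ℝ (A p) (norm_ne_zero_iff.2 hp)
  obtain ⟨f, hf, hfc, hfp, hfq⟩ := exists_contDiff_hasCompactSupport_eq_one_eq_zero A.support p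
  have hω : ContDiff ℝ r fun x => f x • ℓ :=
    (hf.of_le (by exact_mod_cast le_top)).smul contDiff_const
  obtain ⟨M, hM⟩ := hω.exists_bound_iteratedFDeriv_of_hasCompactSupport hfc.smul_right
  have hpair := abs_formEval_le_mul_Bnorm hω hM A
  rw [formEval_smul_eq_apply ℓ hfp hfq, hℓ, RCLike.ofReal_real_eq_id, id, abs_norm] at hpair
  exact pos_of_mul_pos_right ((norm_pos_iff.2 hp).trans_le hpair)
    ((norm_nonneg _).trans (hM 0 r.zero_le p))

end
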